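/- For every integer n ≥ 2, every induced subgraph of the n-dimensional hypercube graph Q_n that has a unique perfect matching contains at most 2^(n-1) vertices. That is, if A is a set of vertices of Q_n such that the subgraph of Q_n induced on A has exactly one perfect matching, then |A| ≤ 2^(n-1). -/

import Mathlib

/-!
Work over a field `F` of characteristic 2 with weights `w i ≠ 0` summing to zero; for `n ≥ 2`
they exist as soon as `F` has an element outside `{0, 1}`. The weighted adjacency matrix of `Q_n`
is `W = ∑ w i • P i`, where the `P i` are the commuting involutive permutation matrices of the
translations by the unit vectors, so `W ^ 2 = (∑ w i) ^ 2 = 0` and `rank W ≤ 2 ^ (n - 1)`.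
In characteristic 2 the determinant of a symmetric matrix is the sum over involutions only, and
the involutions whose graph lies in `Q_n[A]` are its perfect matchings. If there is exactly one,
the principal submatrix of `W` on `A` has a single nonzero term in its determinant, so
`|A| ≤ rank W`.
-/

/-- The `n`-dimensional hypercube graph: vertices are elements of `{0,1}^n`,
adjacent iff they differ in exactly one coordinate. -/
def hypercube (n : ℕ) : SimpleGraph (Fin n → ZMod 2) where
  Adj x y := ∃! i, x i ≠ y i
  symm := by constructor; rintro x y ⟨i, hi, hu⟩; exact ⟨i, Ne.symm hi, fun j hj => hu j (Ne.symm hj)⟩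
  loopless := by constructor; rintro x ⟨i, hi, -⟩; exact hi rfl

open Finset Equiv

theorem CharTwo.sum_sq_of_commute {ι R : Type*} [Ring R] [CharP R 2] (s : Finset ι) (f : ι → R)
    (hf : ∀ i j, Commute (f i) (f j)) : (∑ i ∈ s, f i) ^ 2 = ∑ i ∈ s, f i ^ 2 := by
  classical
  induction s using Finset.induction_on with
  | empty => simp
  | insert a s ha ih =>
    rw [sum_insert ha, sum_insert ha,
      add_pow_char_of_commute 2 (Commute.sum_right _ _ _ fun j _ => hf a j), ih]

namespace Matrix

variable {V R : Type*} [Fintype V] [DecidableEq V] [CommRing R] [CharP R 2]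

theorem det_eq_permanent (M : Matrix V V R) : M.det = M.permanent := by
  rw [det_apply, permanent]
  refine sum_congr rfl fun σ _ => ?_
  rcases Int.units_eq_one_or (Perm.sign σ) with h | h <;> simp [h, CharTwo.neg_eq]

theorem IsSymm.permanent_eq_sum_inv_eq_self {M : Matrix V V R} (hM : M.IsSymm) :
    M.permanent = ∑ σ : Perm V with σ⁻¹ = σ, ∏ i, M (σ i) i := by
  have hinv (σ : Perm V) : ∏ i, M (σ⁻¹ i) i = ∏ i, M (σ i) i := by
    rw [← Equiv.prod_comp σ (fun j => M (σ⁻¹ j) j)]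
    exact prod_congr rfl fun i _ => by simpa using hM.apply (σ i) i
  rw [permanent, ← sum_filter_add_sum_filter_not univ (fun σ : Perm V => σ⁻¹ = σ),
    add_eq_left]
  refine sum_involution (fun σ _ => σ⁻¹) (fun σ _ => by rw [hinv, CharTwo.add_self_eq_zero])
    (fun σ hσ _ => by simpa using hσ) (fun σ hσ => ?_) (fun σ _ => inv_inv σ)
  simpa [eq_comm] using hσ

end Matrix

namespace SimpleGraph

variable {V : Type*} {G : SimpleGraph V}

def Subgraph.ofPerm (σ : Perm V) (hσ : ∀ v, G.Adj v (σ v)) : G.Subgraph where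
  verts := Set.univ
  Adj u v := σ u = v ∨ σ v = u
  adj_sub := by
    rintro u v (rfl | rfl)
    exacts [hσ u, (hσ v).symm]
  edge_vert _ := Set.mem_univ _
  symm := ⟨fun _ _ => Or.symm⟩

theorem Subgraph.isPerfectMatching_ofPerm {σ : Perm V} (hσ : ∀ v, G.Adj v (σ v))
    (hinv : σ⁻¹ = σ) : (ofPerm σ hσ).IsPerfectMatching := by
  refine isPerfectMatching_iff.2 fun v => ⟨σ v, Or.inl rfl, ?_⟩
  rintro u (rfl | rfl)
  · rfl
  · rw [← Perm.inv_eq_iff_eq, hinv]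

theorem Subgraph.IsPerfectMatching.exists_perm {N : G.Subgraph} (hN : N.IsPerfectMatching) :
    ∃ σ : Perm V, σ⁻¹ = σ ∧ ∀ v, N.Adj v (σ v) := by
  choose f hf hfu using isPerfectMatching_iff.1 hN
  have hf_inv : Function.Involutive f := fun v => (hfu (f v) v (hf v).symm).symm
  exact ⟨hf_inv.toPerm f, hf_inv.toPerm_symm, hf⟩

theorem eq_of_existsUnique_isPerfectMatching (h : ∃! N : G.Subgraph, N.IsPerfectMatching)
    {σ τ : Perm V} (hσ : ∀ v, G.Adj v (σ v)) (hτ : ∀ v, G.Adj v (τ v)) (hσ_inv : σ⁻¹ = σ)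
    (hτ_inv : τ⁻¹ = τ) : σ = τ := by
  have hN : Subgraph.ofPerm σ hσ = Subgraph.ofPerm τ hτ :=
    h.unique (Subgraph.isPerfectMatching_ofPerm hσ hσ_inv)
      (Subgraph.isPerfectMatching_ofPerm hτ hτ_inv)
  ext v
  have hadj : (Subgraph.ofPerm τ hτ).Adj v (σ v) := hN ▸ Or.inl rfl
  rcases hadj with h | h
  · exact h.symm
  · rwa [← hτ_inv, Perm.eq_inv_iff_eq]

end SimpleGraph

theorem Matrix.det_ne_zero_of_existsUnique_isPerfectMatching {V R : Type*} [Fintype V]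
    [DecidableEq V] [CommRing R] [IsDomain R] [CharP R 2] {G : SimpleGraph V} {M : Matrix V V R}
    (hM : M.IsSymm) (hM_zero : ∀ u v, ¬G.Adj u v → M u v = 0)
    (hM_ne_zero : ∀ u v, G.Adj u v → M u v ≠ 0) (h : ∃! N : G.Subgraph, N.IsPerfectMatching) :
    M.det ≠ 0 := by
  obtain ⟨N, hN⟩ := h.exists
  obtain ⟨σ₀, hσ₀_inv, hσ₀⟩ := hN.exists_perm
  have hσ₀G (v : V) : G.Adj v (σ₀ v) := N.adj_sub (hσ₀ v)
  rw [M.det_eq_permanent, hM.permanent_eq_sum_inv_eq_self,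
    sum_eq_single_of_mem σ₀ (by simpa using hσ₀_inv)]
  · exact prod_ne_zero_iff.2 fun v _ => hM_ne_zero _ _ (hσ₀G v).symm
  · intro σ hσ_inv hσ_ne
    obtain ⟨v, hv⟩ : ∃ v, ¬G.Adj (σ v) v := by
      by_contra! hσG
      exact hσ_ne (SimpleGraph.eq_of_existsUnique_isPerfectMatching h (fun v => (hσG v).symm) hσ₀G
        (by simpa using hσ_inv) hσ₀_inv)
    exact prod_eq_zero (mem_univ v) (hM_zero _ _ hv)

section WeightedCayleyMatrix

variable {Γ ι R : Type*} [AddCommGroup Γ] [DecidableEq Γ] [Fintype ι] [CommRing R]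

def weightedCayleyMatrix (e : ι → Γ) (w : ι → R) : Matrix Γ Γ R :=
  ∑ i, w i • (Equiv.addRight (e i)).permMatrix R

theorem weightedCayleyMatrix_apply (e : ι → Γ) (w : ι → R) (x y : Γ) :
    weightedCayleyMatrix e w x y = ∑ i, if x + e i = y then w i else 0 := by
  simp [weightedCayleyMatrix, Matrix.sum_apply, PEquiv.toMatrix_apply, eq_comm]

theorem weightedCayleyMatrix_isSymm {e : ι → Γ} (he : ∀ i, e i + e i = 0) (w : ι → R) :
    (weightedCayleyMatrix e w).IsSymm := by
  refine Matrix.IsSymm.ext fun x y => ?_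
  simp only [weightedCayleyMatrix_apply]
  refine sum_congr rfl fun i _ => if_congr ?_ rfl rfl
  constructor <;> rintro rfl <;> rw [add_assoc, he, add_zero]

variable [Fintype Γ]

theorem permMatrix_addRight_add (a b : Γ) : (Equiv.addRight (a + b)).permMatrix R =
    (Equiv.addRight a).permMatrix R * (Equiv.addRight b).permMatrix R := by
  rw [Equiv.addRight_add, Matrix.permMatrix_mul]

variable [CharP R 2]

theorem weightedCayleyMatrix_sq {e : ι → Γ} (he : ∀ i, e i + e i = 0) (w : ι → R) :
    weightedCayleyMatrix e w ^ 2 = (∑ i, w i) ^ 2 • 1 := by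
  have hcomm (a b : Γ) :
      Commute ((Equiv.addRight a).permMatrix R) ((Equiv.addRight b).permMatrix R) := by
    rw [Commute, SemiconjBy, ← permMatrix_addRight_add, ← permMatrix_addRight_add, add_comm]
  rw [weightedCayleyMatrix,
    CharTwo.sum_sq_of_commute _ _ fun i j => ((hcomm _ _).smul_left _).smul_right _,
    CharTwo.sum_sq, sum_smul]
  refine sum_congr rfl fun i _ => ?_
  rw [smul_pow, sq ((Equiv.addRight (e i)).permMatrix R), ← permMatrix_addRight_add, he]
  simp

theorem two_mul_rank_weightedCayleyMatrix_le {F : Type*} [Field F] [CharP F 2] {e : ι → Γ}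
    (he : ∀ i, e i + e i = 0) {w : ι → F} (hw : ∑ i, w i = 0) :
    2 * (weightedCayleyMatrix e w).rank ≤ Fintype.card Γ := by
  rw [two_mul]
  refine Matrix.rank_add_rank_le_card_of_mul_eq_zero ?_
  rw [← sq, weightedCayleyMatrix_sq he, hw]
  simp

end WeightedCayleyMatrix

theorem hypercube_adj_iff {n : ℕ} {x y : Fin n → ZMod 2} :
    (hypercube n).Adj x y ↔ ∃ i, x + Pi.single i 1 = y := by
  constructor
  · rintro ⟨i, hi, hu⟩
    refine ⟨i, funext fun j => ?_⟩
    rcases eq_or_ne j i with rfl | hj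
    · have key : ∀ a b : ZMod 2, a ≠ b → a + 1 = b := by decide
      simpa using key _ _ hi
    · simpa [hj] using not_imp_comm.1 (hu j) hj
  · rintro ⟨i, rfl⟩
    refine ⟨i, by simp, fun j hj => ?_⟩
    by_contra hji
    simp [hji] at hj

section Hypercube

variable {n : ℕ}

theorem hypercube_weightedCayleyMatrix_eq_zero {R : Type*} [CommRing R] (w : Fin n → R)
    {x y : Fin n → ZMod 2} (h : ¬(hypercube n).Adj x y) :
    weightedCayleyMatrix (fun i => Pi.single i 1) w x y = 0 := by
  rw [weightedCayleyMatrix_apply]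
  exact sum_eq_zero fun i _ => if_neg fun hi => h (hypercube_adj_iff.2 ⟨i, hi⟩)

theorem hypercube_weightedCayleyMatrix_ne_zero {R : Type*} [CommRing R] {w : Fin n → R}
    (hw : ∀ i, w i ≠ 0) {x y : Fin n → ZMod 2} (h : (hypercube n).Adj x y) :
    weightedCayleyMatrix (fun i => Pi.single i 1) w x y ≠ 0 := by
  obtain ⟨i, rfl⟩ := hypercube_adj_iff.1 h
  rw [weightedCayleyMatrix_apply, sum_eq_single i (fun j _ hji => if_neg ?_) (by simp), if_pos rfl]
  · exact hw i
  · rw [add_right_inj]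
    intro hij
    simpa [hji] using congrFun hij j

theorem two_mul_ncard_le_of_existsUnique_isPerfectMatching {F : Type*} [Field F] [CharP F 2]
    {w : Fin n → F} (hw : ∀ i, w i ≠ 0) (hsum : ∑ i, w i = 0) {A : Set (Fin n → ZMod 2)}
    (h : ∃! N : ((hypercube n).induce A).Subgraph, N.IsPerfectMatching) :
    2 * A.ncard ≤ 2 ^ n := by
  classical
  set W := weightedCayleyMatrix (fun i : Fin n => Pi.single i (1 : ZMod 2)) w
  set M : Matrix A A F := W.submatrix Subtype.val Subtype.val
  have he (i : Fin n) : (Pi.single i 1 + Pi.single i 1 : Fin n → ZMod 2) = 0 := by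
    rw [← Pi.single_add, CharTwo.add_self_eq_zero, Pi.single_zero]
  have hdet : M.det ≠ 0 :=
    Matrix.det_ne_zero_of_existsUnique_isPerfectMatching
      ((weightedCayleyMatrix_isSymm he w).submatrix _)
      (fun _ _ huv => hypercube_weightedCayleyMatrix_eq_zero w huv)
      (fun _ _ huv => hypercube_weightedCayleyMatrix_ne_zero hw huv) h
  calc 2 * A.ncard = 2 * M.rank := by
        rw [Matrix.rank_of_det_ne_zero hdet, ← Nat.card_coe_set_eq, Nat.card_eq_fintype_card]
    _ ≤ 2 * W.rank := Nat.mul_le_mul_left 2 (Matrix.rank_submatrix_le _ _ _)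
    _ ≤ Fintype.card (Fin n → ZMod 2) := two_mul_rank_weightedCayleyMatrix_le he hsum
    _ = 2 ^ n := by simp

end Hypercube

theorem exists_ne_zero_sum_eq_zero {F : Type*} [Field F] [CharP F 2] {x : F} (hx₀ : x ≠ 0)
    (hx₁ : x ≠ 1) {n : ℕ} (hn : 2 ≤ n) : ∃ w : Fin n → F, (∀ i, w i ≠ 0) ∧ ∑ i, w i = 0 := by
  obtain ⟨m, rfl⟩ := Nat.exists_eq_add_of_le' hn
  have hxm : x + m ≠ 0 := by
    rcases CharTwo.natCast_cases (R := F) m with h | h <;> simpa [h, CharTwo.add_eq_zero]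
  refine ⟨Fin.cons x (Fin.cons (x + m) fun _ => 1),
    Fin.cases hx₀ (Fin.cases hxm fun _ => one_ne_zero), ?_⟩
  simp only [Fin.sum_univ_succ, Fin.cons_zero, Fin.cons_succ, sum_const, card_univ,
    Fintype.card_fin, nsmul_one]
  rw [add_assoc, CharTwo.add_self_eq_zero (m : F), add_zero, CharTwo.add_self_eq_zero]

/-- Any induced subgraph of `Q_n` with a unique perfect matching has at most
`2^(n-1)` vertices, for all `n ≥ 2`. -/
theorem induced_unique_pm_hypercube (n : ℕ) (hn : 2 ≤ n)
    (A : Set (Fin n → ZMod 2))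
    (huniq : ∃! N : ((hypercube n).induce A).Subgraph, N.IsPerfectMatching) :
    A.ncard ≤ 2 ^ (n - 1) := by
  have hX₁ : (RatFunc.X : RatFunc (ZMod 2)) ≠ 1 := fun h => by
    simpa using congrArg RatFunc.intDegree h
  obtain ⟨w, hw, hsum⟩ := exists_ne_zero_sum_eq_zero RatFunc.X_ne_zero hX₁ hn
  have hbound := two_mul_ncard_le_of_existsUnique_isPerfectMatching hw hsum huniq
  have hpow : 2 ^ n = 2 * 2 ^ (n - 1) := by rw [← pow_succ', Nat.sub_add_cancel (by omega)]
  omega
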